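/- arXiv:2511.14736 — 2 statements merged into one kernel-verified Lean document; each statement's English description precedes it below -/
import Mathlib

section
/- Let δ > 0 and σ ∈ ℝ, and define w_{δ,σ}(t) = coth(δ(t−σ)) − tanh(δ(1−σ)) for real t, where coth u = cosh u / sinh u. Then for every t < min(σ,1): w_{δ,σ}(t) < 0; the function t ↦ |w_{δ,σ}(t)| is monotonically increasing on (−∞, min(σ,1)); and |w_{δ,σ}(t)| ≤ 1/(δ·(σ−t)) + 2. -/
open Real

/-- The weight `w_{δ,σ}(t) = coth(δ(t−σ)) − tanh(δ(1−σ))`. -/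
noncomputable def wWeight (δ σ t : ℝ) : ℝ :=
  Real.cosh (δ * (t - σ)) / Real.sinh (δ * (t - σ)) - Real.tanh (δ * (1 - σ))

private lemma tanh_abs_le (x : ℝ) : |Real.tanh x| ≤ 1 := by
  have h1 : Real.sinh x < Real.cosh x := Real.sinh_lt_cosh x
  have h2 : Real.sinh (-x) < Real.cosh (-x) := Real.sinh_lt_cosh (-x)
  rw [Real.sinh_neg, Real.cosh_neg] at h2
  have hc : 0 < Real.cosh x := Real.cosh_pos _
  rw [Real.tanh_eq_sinh_div_cosh, abs_div, abs_of_pos hc, div_le_one hc]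
  rw [abs_le]; constructor <;> linarith

private lemma coth_gt_one {v : ℝ} (hv : 0 < v) : 1 < Real.cosh v / Real.sinh v :=
  (one_lt_div (Real.sinh_pos_iff.2 hv)).2 (Real.sinh_lt_cosh v)

private lemma coth_le {v : ℝ} (hv : 0 < v) :
    Real.cosh v / Real.sinh v ≤ 1 / v + 1 := by
  have hs : 0 < Real.sinh v := Real.sinh_pos_iff.2 hv
  rw [div_le_iff₀ hs]
  have hkey : v * Real.exp (-v) ≤ Real.sinh v := by
    rw [Real.sinh_eq]
    have h := Real.add_one_le_exp (2 * v)
    have he : Real.exp (2 * v) = Real.exp v * Real.exp v := by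
      rw [← Real.exp_add]; ring_nf
    have hp : 0 < Real.exp (-v) := Real.exp_pos _
    have hinv : Real.exp (-v) * Real.exp v = 1 := by
      rw [← Real.exp_add]; simp
    nlinarith [Real.exp_pos v]
  have hcs : Real.cosh v - Real.sinh v = Real.exp (-v) := by
    rw [Real.cosh_eq, Real.sinh_eq]; ring
  have hv' : v ≠ 0 := ne_of_gt hv
  have : v * (Real.cosh v - Real.sinh v) ≤ Real.sinh v := by
    rw [hcs]; exact hkey
  have h1 : (1 / v + 1) * Real.sinh v = (Real.sinh v + v * Real.sinh v) / v := by
    field_simp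
  rw [h1, le_div_iff₀ hv]
  nlinarith

private lemma coth_anti {v v' : ℝ} (hv' : 0 < v') (hle : v' ≤ v) :
    Real.cosh v / Real.sinh v ≤ Real.cosh v' / Real.sinh v' := by
  have hv : 0 < v := lt_of_lt_of_le hv' hle
  have hs : 0 < Real.sinh v := Real.sinh_pos_iff.2 hv
  have hs' : 0 < Real.sinh v' := Real.sinh_pos_iff.2 hv'
  rw [div_le_div_iff₀ hs hs']
  have h := Real.sinh_nonneg_iff.2 (by linarith : (0:ℝ) ≤ v - v')
  rw [Real.sinh_sub] at h; nlinarith [Real.cosh_pos v, Real.cosh_pos v']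

private lemma wWeight_eq {δ σ t : ℝ} (hδ : 0 < δ) (ht : t < σ) :
    wWeight δ σ t = -(Real.cosh (δ * (σ - t)) / Real.sinh (δ * (σ - t))) -
      Real.tanh (δ * (1 - σ)) := by
  unfold wWeight
  have : δ * (t - σ) = -(δ * (σ - t)) := by ring
  rw [this, Real.cosh_neg, Real.sinh_neg, div_neg]

/-- For `δ > 0` and real `σ`: for every `t < min(σ,1)` the weight `w_{δ,σ}(t)` is
negative, `t ↦ |w_{δ,σ}(t)|` is monotonically increasing on `(−∞, min(σ,1))`, and
`|w_{δ,σ}(t)| ≤ 1/(δ(σ−t)) + 2`. -/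
theorem wWeight_properties (δ σ : ℝ) (hδ : 0 < δ) :
    (∀ t : ℝ, t < min σ 1 → wWeight δ σ t < 0) ∧
    MonotoneOn (fun t : ℝ => |wWeight δ σ t|) (Set.Iio (min σ 1)) ∧
    (∀ t : ℝ, t < min σ 1 → |wWeight δ σ t| ≤ 1 / (δ * (σ - t)) + 2) := by
  have htanh := tanh_abs_le (δ * (1 - σ))
  rw [abs_le] at htanh
  have hneg : ∀ t : ℝ, t < min σ 1 → wWeight δ σ t < 0 := by
    intro t ht
    have htσ : t < σ := lt_of_lt_of_le ht (min_le_left _ _)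
    have hv : 0 < δ * (σ - t) := mul_pos hδ (by linarith)
    rw [wWeight_eq hδ htσ]
    have := coth_gt_one hv
    linarith [htanh.1]
  have habs : ∀ t : ℝ, t < min σ 1 →
      |wWeight δ σ t| = Real.cosh (δ * (σ - t)) / Real.sinh (δ * (σ - t)) +
        Real.tanh (δ * (1 - σ)) := by
    intro t ht
    have htσ : t < σ := lt_of_lt_of_le ht (min_le_left _ _)
    rw [abs_of_neg (hneg t ht), wWeight_eq hδ htσ]; ring
  refine ⟨hneg, ?_, ?_⟩
  · intro a ha b hb hab
    simp only [Set.mem_Iio] at ha hb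
    show |wWeight δ σ a| ≤ |wWeight δ σ b|
    rw [habs a ha, habs b hb]
    have haσ : a < σ := lt_of_lt_of_le ha (min_le_left _ _)
    have hbσ : b < σ := lt_of_lt_of_le hb (min_le_left _ _)
    have hv' : 0 < δ * (σ - b) := mul_pos hδ (by linarith)
    have hle : δ * (σ - b) ≤ δ * (σ - a) := by nlinarith
    linarith [coth_anti hv' hle]
  · intro t ht
    have htσ : t < σ := lt_of_lt_of_le ht (min_le_left _ _)
    have hv : 0 < δ * (σ - t) := mul_pos hδ (by linarith)
    rw [habs t ht]
    linarith [coth_le hv, htanh.2]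
end

section
/- Let c₁, c₂ ≥ 0 and assume |Q(t₂) − Q(t₁)| ≤ c₁·|t₂ − t₁| + c₂ for all reals t₁, t₂ > 0. Then for every real x ≥ 1 and every integer k ≥ 1, ∫_{k−1/2}^{k+1/2} |M(√(x/u)) − M(√(x/k))| du ≤ (c₁/4)·√x·(1/√(k−1/2) − 1/√(k+1/2)) + c₂. -/
open Real

noncomputable def Mf (x : ℝ) : ℝ :=
  ∑ n ∈ Finset.Icc 1 ⌊x⌋₊, (ArithmeticFunction.moebius n : ℝ)

noncomputable def Qf (x : ℝ) : ℕ :=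
  Set.ncard {n : ℕ | Squarefree n ∧ (n : ℝ) ≤ x}

lemma Qf_eq (x : ℝ) : Qf x = ((Finset.Icc 1 ⌊x⌋₊).filter Squarefree).card := by
  have h : {n : ℕ | Squarefree n ∧ (n : ℝ) ≤ x}
      = ↑((Finset.Icc 1 ⌊x⌋₊).filter Squarefree) := by
    ext n
    simp only [Finset.coe_filter, Finset.mem_Icc, Set.mem_setOf_eq]
    constructor
    · rintro ⟨hsq, hle⟩
      have hn : n ≠ 0 := by rintro rfl; exact not_squarefree_zero hsq
      exact ⟨⟨Nat.one_le_iff_ne_zero.mpr hn, Nat.le_floor hle⟩, hsq⟩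
    · rintro ⟨⟨h1, h2⟩, hsq⟩
      refine ⟨hsq, ?_⟩
      have hx1 : (0:ℝ) ≤ x := by
        by_contra hlt
        push_neg at hlt
        rw [Nat.floor_eq_zero.mpr (by linarith)] at h2
        omega
      calc (n : ℝ) ≤ (⌊x⌋₊ : ℝ) := by exact_mod_cast h2
        _ ≤ x := Nat.floor_le hx1
  rw [Qf, h, Set.ncard_coe_finset]

lemma abs_moebius_le_one (n : ℕ) : |(ArithmeticFunction.moebius n : ℝ)| ≤ 1 := by
  by_cases h : Squarefree n
  · rw [ArithmeticFunction.moebius_apply_of_squarefree h]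
    push_cast
    rw [abs_pow, abs_neg, abs_one, one_pow]
  · rw [ArithmeticFunction.moebius_eq_zero_of_not_squarefree h]
    simp

lemma abs_Mf_sub (a b : ℝ) (hab : a ≤ b) : |Mf b - Mf a| ≤ (Qf b : ℝ) - Qf a := by
  have hfl : ⌊a⌋₊ ≤ ⌊b⌋₊ := Nat.floor_le_floor hab
  have hsub : Finset.Icc 1 ⌊a⌋₊ ⊆ Finset.Icc 1 ⌊b⌋₊ := Finset.Icc_subset_Icc_right hfl
  have hsdiff : Finset.Icc 1 ⌊b⌋₊ \ Finset.Icc 1 ⌊a⌋₊ = Finset.Ioc ⌊a⌋₊ ⌊b⌋₊ := by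
    ext n
    simp only [Finset.mem_sdiff, Finset.mem_Icc, Finset.mem_Ioc, not_and, not_le]
    omega
  have h1 : Mf b - Mf a
      = ∑ n ∈ Finset.Ioc ⌊a⌋₊ ⌊b⌋₊, (ArithmeticFunction.moebius n : ℝ) := by
    rw [Mf, Mf, ← Finset.sum_sdiff_eq_sub hsub, hsdiff]
  have h2 : ∑ n ∈ Finset.Ioc ⌊a⌋₊ ⌊b⌋₊, |(ArithmeticFunction.moebius n : ℝ)|
      = ∑ n ∈ (Finset.Ioc ⌊a⌋₊ ⌊b⌋₊).filter Squarefree,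
          |(ArithmeticFunction.moebius n : ℝ)| := by
    refine (Finset.sum_filter_of_ne ?_).symm
    intro n _ hne
    have : (ArithmeticFunction.moebius n : ℤ) ≠ 0 := by
      intro h; rw [h] at hne; simp at hne
    exact ArithmeticFunction.moebius_ne_zero_iff_squarefree.mp this
  have h3 : ((Finset.Ioc ⌊a⌋₊ ⌊b⌋₊).filter Squarefree).card
      = ((Finset.Icc 1 ⌊b⌋₊).filter Squarefree).card
        - ((Finset.Icc 1 ⌊a⌋₊).filter Squarefree).card := by
    have : (Finset.Icc 1 ⌊b⌋₊ \ Finset.Icc 1 ⌊a⌋₊).filter Squarefree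
        = (Finset.Icc 1 ⌊b⌋₊).filter Squarefree \ (Finset.Icc 1 ⌊a⌋₊).filter Squarefree := by
      ext n
      simp only [Finset.mem_filter, Finset.mem_sdiff, not_and]
      tauto
    rw [← hsdiff, this, Finset.card_sdiff_of_subset (Finset.filter_subset_filter _ hsub)]
  have hcardle : ((Finset.Icc 1 ⌊a⌋₊).filter Squarefree).card
      ≤ ((Finset.Icc 1 ⌊b⌋₊).filter Squarefree).card :=
    Finset.card_le_card (Finset.filter_subset_filter _ hsub)
  calc |Mf b - Mf a|
      ≤ ∑ n ∈ Finset.Ioc ⌊a⌋₊ ⌊b⌋₊, |(ArithmeticFunction.moebius n : ℝ)| := by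
        rw [h1]; exact Finset.abs_sum_le_sum_abs _ _
    _ = ∑ n ∈ (Finset.Ioc ⌊a⌋₊ ⌊b⌋₊).filter Squarefree,
          |(ArithmeticFunction.moebius n : ℝ)| := h2
    _ ≤ ∑ _n ∈ (Finset.Ioc ⌊a⌋₊ ⌊b⌋₊).filter Squarefree, (1:ℝ) :=
        Finset.sum_le_sum fun n _ => abs_moebius_le_one n
    _ = ((Finset.Ioc ⌊a⌋₊ ⌊b⌋₊).filter Squarefree).card := by simp
    _ = (Qf b : ℝ) - Qf a := by
        rw [Qf_eq, Qf_eq, h3]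
        push_cast [Nat.cast_sub hcardle]
        ring

lemma sqrt_trapezoid_aux (r s t m : ℝ) (hr : 1 ≤ r)
    (hs0 : 0 < s) (ht0 : 0 < t) (hm0 : 0 < m) (hst : s ≤ t)
    (hs2 : s^2 = r - 1/2) (ht2 : t^2 = r + 1/2) (hm2 : m^2 = r) :
    4*m - 2*s - 2*t ≤ (1/4) * (1/s - 1/t) := by
  set p := s * t with hp
  set q := s + t with hq
  have hp0 : 0 < p := mul_pos hs0 ht0
  have hq0 : 0 < q := by positivity
  have hp2 : p^2 = r^2 - 1/4 := by rw [hp, mul_pow, hs2, ht2]; ring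
  have hq2 : q^2 = 2*r + 2*p := by rw [hq, hp]; nlinarith [hs2, ht2]
  have htsq : (t - s) * q = 1 := by rw [hq]; nlinarith [hs2, ht2]
  have hB : 32*r^2 - 9 ≤ 32*p*r := by
    nlinarith [hp2, mul_pos hp0 (show (0:ℝ) < r by linarith), sq_nonneg (32*p*r - (32*r^2-9)),
      sq_nonneg (32*p*r + (32*r^2-9)), sq_nonneg r, sq_nonneg (r-1)]
  have hid : (1+8*p*q^2)^2 - (16*p*m*q)^2 = 9 + 32*p*r - 32*r^2 := by
    linear_combination (256*p^2 - 32) * hp2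
      + (16*p + 64*p^2*(q^2+2*r+2*p) - 256*p^2*r) * hq2 + (-256*p^2*q^2) * hm2
  have hsq : (16*p*m*q)^2 ≤ (1+8*p*q^2)^2 := by linarith [hid, hB]
  have hA0 : 0 ≤ 16*p*m*q := by positivity
  have hB0 : 0 ≤ 1+8*p*q^2 := by positivity
  have hABq : 16*p*m*q ≤ 1+8*p*q^2 := (pow_le_pow_iff_left₀ hA0 hB0 two_ne_zero).mp hsq
  have hAB : 16*p*m ≤ (t - s) + 8*p*q := by
    rw [← mul_le_mul_iff_of_pos_right hq0]
    calc 16*p*m*q ≤ 1+8*p*q^2 := hABq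
      _ = ((t-s) + 8*p*q)*q := by rw [← htsq]; ring
  have hfin : (1/4)*(1/s - 1/t) = (t - s)/(4*p) := by
    rw [hp]; field_simp
  rw [hfin, le_div_iff₀ (by positivity)]
  have hexp : (4*m - 2*s - 2*t) * (4*p) = 16*p*m - 8*p*q := by rw [hq]; ring
  rw [hexp]
  linarith [hAB]

lemma sqrt_trapezoid (r : ℝ) (hr : 1 ≤ r) :
    4*Real.sqrt r - 2*Real.sqrt (r-1/2) - 2*Real.sqrt (r+1/2)
      ≤ (1/4) * (1/Real.sqrt (r-1/2) - 1/Real.sqrt (r+1/2)) :=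
  sqrt_trapezoid_aux r _ _ _ hr (Real.sqrt_pos.mpr (by linarith))
    (Real.sqrt_pos.mpr (by linarith)) (Real.sqrt_pos.mpr (by linarith))
    (Real.sqrt_le_sqrt (by linarith)) (Real.sq_sqrt (by linarith))
    (Real.sq_sqrt (by linarith)) (Real.sq_sqrt (by linarith))

lemma cont_one_div_sqrt {s : Set ℝ} (hs : ∀ u ∈ s, 0 < u) :
    ContinuousOn (fun u : ℝ => 1 / Real.sqrt u) s := by
  refine ContinuousOn.div continuousOn_const
    Real.continuous_sqrt.continuousOn (fun u hu => ?_)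
  exact ne_of_gt (Real.sqrt_pos.mpr (hs u hu))

lemma integral_one_div_sqrt {a b : ℝ} (ha : 0 < a) (hab : a ≤ b) :
    ∫ u in a..b, 1 / Real.sqrt u = 2 * Real.sqrt b - 2 * Real.sqrt a := by
  have h1 : ∀ u ∈ Set.uIcc a b, HasDerivAt (fun y => 2 * Real.sqrt y) (1 / Real.sqrt u) u := by
    intro u hu
    have hu0 : 0 < u := lt_of_lt_of_le ha (by rw [Set.uIcc_of_le hab] at hu; exact hu.1)
    have := (Real.hasDerivAt_sqrt (ne_of_gt hu0)).const_mul 2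
    refine this.congr_deriv ?_
    have : Real.sqrt u ≠ 0 := ne_of_gt (Real.sqrt_pos.mpr hu0)
    field_simp
  have h2 : IntervalIntegrable (fun u => 1 / Real.sqrt u) MeasureTheory.volume a b := by
    apply ContinuousOn.intervalIntegrable
    apply cont_one_div_sqrt
    intro u hu
    exact lt_of_lt_of_le ha (by rw [Set.uIcc_of_le hab] at hu; exact hu.1)
  rw [intervalIntegral.integral_eq_sub_of_hasDerivAt h1 h2]

lemma measurable_Mf_aux :
    Measurable (fun x : ℝ => ∑ n ∈ Finset.Icc 1 ⌊x⌋₊, (ArithmeticFunction.moebius n : ℝ)) := by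
  have : (fun x : ℝ => ∑ n ∈ Finset.Icc 1 ⌊x⌋₊, (ArithmeticFunction.moebius n : ℝ))
      = (fun m : ℕ => ∑ n ∈ Finset.Icc 1 m, (ArithmeticFunction.moebius n : ℝ)) ∘ Nat.floor :=
    rfl
  rw [this]
  exact measurable_from_top.comp Nat.measurable_floor

lemma abs_Mf_le (y : ℝ) (hy : 0 ≤ y) : |Mf y| ≤ y := by
  calc |Mf y| ≤ ∑ n ∈ Finset.Icc 1 ⌊y⌋₊, |(ArithmeticFunction.moebius n : ℝ)| :=
        Finset.abs_sum_le_sum_abs _ _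
    _ ≤ ∑ _n ∈ Finset.Icc 1 ⌊y⌋₊, (1:ℝ) := Finset.sum_le_sum fun n _ => abs_moebius_le_one n
    _ = (⌊y⌋₊ : ℝ) := by simp
    _ ≤ y := Nat.floor_le hy

lemma measurable_Mf : Measurable Mf := measurable_Mf_aux

/-- If `|Q(t₂) − Q(t₁)| ≤ c₁|t₂ − t₁| + c₂` for all `t₁, t₂ > 0`, then for every
`x ≥ 1` and integer `k ≥ 1`,
`∫_{k−1/2}^{k+1/2} |M(√(x/u)) − M(√(x/k))| du
  ≤ (c₁/4)·√x·(1/√(k−1/2) − 1/√(k+1/2)) + c₂`. -/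
theorem integral_absDiff_le_trapezoid (c₁ c₂ : ℝ) (hc₁ : 0 ≤ c₁) (hc₂ : 0 ≤ c₂)
    (hQ : ∀ t₁ t₂ : ℝ, 0 < t₁ → 0 < t₂ →
      |(Qf t₂ : ℝ) - (Qf t₁ : ℝ)| ≤ c₁ * |t₂ - t₁| + c₂)
    (x : ℝ) (hx : 1 ≤ x) (k : ℕ) (hk : 1 ≤ k) :
    (∫ u in ((k : ℝ) - 1/2)..((k : ℝ) + 1/2),
        |Mf (Real.sqrt (x / u)) - Mf (Real.sqrt (x / (k : ℝ)))|)
      ≤ (c₁ / 4) * Real.sqrt x *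
          (1 / Real.sqrt ((k : ℝ) - 1/2) - 1 / Real.sqrt ((k : ℝ) + 1/2)) + c₂ := by
  have hr : (1:ℝ) ≤ (k:ℝ) := by exact_mod_cast hk
  set r : ℝ := (k:ℝ) with hrdef
  have ha0 : (0:ℝ) < r - 1/2 := by linarith
  have hr0 : (0:ℝ) < r := by linarith
  have hb0 : (0:ℝ) < r + 1/2 := by linarith
  have hab : r - 1/2 ≤ r + 1/2 := by linarith
  have har : r - 1/2 ≤ r := by linarith
  have hrb : r ≤ r + 1/2 := by linarith
  have hx0 : (0:ℝ) < x := by linarith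
  -- M-difference bound
  have hM : ∀ y z : ℝ, 0 < y → 0 < z → |Mf z - Mf y| ≤ c₁ * |z - y| + c₂ := by
    have base : ∀ y z : ℝ, 0 < y → 0 < z → y ≤ z → |Mf z - Mf y| ≤ c₁ * |z - y| + c₂ := by
      intro y z hy hz hyz
      calc |Mf z - Mf y| ≤ (Qf z : ℝ) - Qf y := abs_Mf_sub y z hyz
        _ ≤ |(Qf z : ℝ) - Qf y| := le_abs_self _
        _ ≤ c₁ * |z - y| + c₂ := hQ y z hy hz
    intro y z hy hz
    rcases le_total y z with h | h
    · exact base y z hy hz h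
    · rw [abs_sub_comm, abs_sub_comm z y]; exact base z y hz hy h
  set f : ℝ → ℝ := fun u => |Mf (Real.sqrt (x / u)) - Mf (Real.sqrt (x / r))| with hfdef
  set g : ℝ → ℝ := fun u => c₁ * Real.sqrt x * |1 / Real.sqrt u - 1 / Real.sqrt r| + c₂
    with hgdef
  -- pointwise bound
  have hpt : ∀ u ∈ Set.Icc (r - 1/2) (r + 1/2), f u ≤ g u := by
    intro u hu
    have hu0 : 0 < u := lt_of_lt_of_le ha0 hu.1
    have h1 : 0 < Real.sqrt (x / u) := Real.sqrt_pos.mpr (div_pos hx0 hu0)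
    have h2 : 0 < Real.sqrt (x / r) := Real.sqrt_pos.mpr (div_pos hx0 hr0)
    have hMd := hM _ _ h2 h1
    have heq : |Real.sqrt (x / u) - Real.sqrt (x / r)|
        = Real.sqrt x * |1 / Real.sqrt u - 1 / Real.sqrt r| := by
      rw [Real.sqrt_div hx0.le, Real.sqrt_div hx0.le,
        show Real.sqrt x / Real.sqrt u - Real.sqrt x / Real.sqrt r
          = Real.sqrt x * (1 / Real.sqrt u - 1 / Real.sqrt r) by ring,
        abs_mul, abs_of_nonneg (Real.sqrt_nonneg x)]
    rw [heq] at hMd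
    simp only [hfdef, hgdef]
    rw [← mul_assoc] at hMd
    exact hMd
  -- integrability of f
  have hmeasf : Measurable f := by
    apply Measurable.abs
    apply Measurable.sub _ measurable_const
    exact measurable_Mf.comp (Real.continuous_sqrt.measurable.comp
      (measurable_const.div measurable_id))
  have hfint : IntervalIntegrable f MeasureTheory.volume (r - 1/2) (r + 1/2) := by
    rw [intervalIntegrable_iff]
    refine MeasureTheory.Integrable.mono'
      (g := fun _ => Real.sqrt (x / (r - 1/2)) + Real.sqrt (x / r))
      ((MeasureTheory.integrableOn_const_iff enorm_ne_top).mpr (Or.inr ?_))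
      hmeasf.aestronglyMeasurable.restrict ?_
    · rw [Set.uIoc_of_le hab]; exact measure_Ioc_lt_top
    · rw [MeasureTheory.ae_restrict_iff' measurableSet_uIoc]
      filter_upwards with u hu
      rw [Set.uIoc_of_le hab] at hu
      have hu0 : 0 < u := lt_trans ha0 hu.1
      have hle : Real.sqrt (x / u) ≤ Real.sqrt (x / (r - 1/2)) := by
        apply Real.sqrt_le_sqrt
        exact div_le_div_of_nonneg_left hx0.le ha0 hu.1.le
      have b1 := abs_Mf_le (Real.sqrt (x / u)) (Real.sqrt_nonneg _)
      have b2 := abs_Mf_le (Real.sqrt (x / r)) (Real.sqrt_nonneg _)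
      have : f u ≤ |Mf (Real.sqrt (x / u))| + |Mf (Real.sqrt (x / r))| := abs_sub _ _
      rw [Real.norm_eq_abs, abs_abs]
      calc f u ≤ |Mf (Real.sqrt (x / u))| + |Mf (Real.sqrt (x / r))| := this
        _ ≤ Real.sqrt (x / (r - 1/2)) + Real.sqrt (x / r) := by
            apply add_le_add (le_trans b1 hle) (le_trans b2 (le_refl _))
  -- integrability of g
  have hcont : ∀ c d : ℝ, 0 < c → c ≤ d →
      IntervalIntegrable (fun u => |1 / Real.sqrt u - 1 / Real.sqrt r|)
        MeasureTheory.volume c d := by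
    intro c d hc hcd
    apply ContinuousOn.intervalIntegrable
    apply ContinuousOn.abs
    apply ContinuousOn.sub (cont_one_div_sqrt ?_) continuousOn_const
    intro u hu
    rw [Set.uIcc_of_le hcd] at hu
    exact lt_of_lt_of_le hc hu.1
  have hgint : IntervalIntegrable g MeasureTheory.volume (r - 1/2) (r + 1/2) := by
    apply IntervalIntegrable.add _ intervalIntegrable_const
    exact (hcont _ _ ha0 hab).const_mul _
  -- comparison
  have hcomp : (∫ u in (r - 1/2)..(r + 1/2), f u) ≤ ∫ u in (r - 1/2)..(r + 1/2), g u :=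
    intervalIntegral.integral_mono_on hab hfint hgint hpt
  -- evaluate ∫ g
  have hJ : (∫ u in (r - 1/2)..(r + 1/2), |1 / Real.sqrt u - 1 / Real.sqrt r|)
      = 4 * Real.sqrt r - 2 * Real.sqrt (r - 1/2) - 2 * Real.sqrt (r + 1/2) := by
    have hsplit := intervalIntegral.integral_add_adjacent_intervals
      (hcont _ _ ha0 har) (hcont _ _ hr0 hrb)
    rw [← hsplit]
    have hp1 : (∫ u in (r - 1/2)..r, |1 / Real.sqrt u - 1 / Real.sqrt r|)
        = ∫ u in (r - 1/2)..r, (1 / Real.sqrt u - 1 / Real.sqrt r) := by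
      apply intervalIntegral.integral_congr
      intro u hu
      rw [Set.uIcc_of_le har] at hu
      have hu0 : 0 < u := lt_of_lt_of_le ha0 hu.1
      have : 1 / Real.sqrt r ≤ 1 / Real.sqrt u :=
        one_div_le_one_div_of_le (Real.sqrt_pos.mpr hu0) (Real.sqrt_le_sqrt hu.2)
      exact abs_of_nonneg (by linarith)
    have hp2 : (∫ u in r..(r + 1/2), |1 / Real.sqrt u - 1 / Real.sqrt r|)
        = ∫ u in r..(r + 1/2), (1 / Real.sqrt r - 1 / Real.sqrt u) := by
      apply intervalIntegral.integral_congr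
      intro u hu
      rw [Set.uIcc_of_le hrb] at hu
      have : 1 / Real.sqrt u ≤ 1 / Real.sqrt r :=
        one_div_le_one_div_of_le (Real.sqrt_pos.mpr hr0) (Real.sqrt_le_sqrt hu.1)
      exact (abs_sub_comm _ _).trans (abs_of_nonneg (by linarith))
    have hint1 : IntervalIntegrable (fun u => 1 / Real.sqrt u) MeasureTheory.volume
        (r - 1/2) r := by
      apply ContinuousOn.intervalIntegrable
      apply cont_one_div_sqrt
      intro u hu
      rw [Set.uIcc_of_le har] at hu
      exact lt_of_lt_of_le ha0 hu.1
    have hint2 : IntervalIntegrable (fun u => 1 / Real.sqrt u) MeasureTheory.volume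
        r (r + 1/2) := by
      apply ContinuousOn.intervalIntegrable
      apply cont_one_div_sqrt
      intro u hu
      rw [Set.uIcc_of_le hrb] at hu
      exact lt_of_lt_of_le hr0 hu.1
    rw [hp1, hp2,
      intervalIntegral.integral_sub hint1 intervalIntegrable_const,
      intervalIntegral.integral_sub intervalIntegrable_const hint2,
      integral_one_div_sqrt ha0 har, integral_one_div_sqrt hr0 hrb,
      intervalIntegral.integral_const, intervalIntegral.integral_const]
    simp only [smul_eq_mul]
    ring
  have hgval : (∫ u in (r - 1/2)..(r + 1/2), g u)
      = c₁ * Real.sqrt x *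
          (4 * Real.sqrt r - 2 * Real.sqrt (r - 1/2) - 2 * Real.sqrt (r + 1/2)) + c₂ := by
    simp only [hgdef]
    rw [intervalIntegral.integral_add ((hcont _ _ ha0 hab).const_mul _)
        intervalIntegrable_const,
      intervalIntegral.integral_const_mul, hJ, intervalIntegral.integral_const]
    simp only [smul_eq_mul]
    ring
  -- final comparison
  have hkey := sqrt_trapezoid r hr
  have hmul := mul_le_mul_of_nonneg_left hkey
    (by positivity : (0:ℝ) ≤ c₁ * Real.sqrt x)
  calc (∫ u in (r - 1/2)..(r + 1/2), f u)
      ≤ ∫ u in (r - 1/2)..(r + 1/2), g u := hcomp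
    _ = c₁ * Real.sqrt x *
          (4 * Real.sqrt r - 2 * Real.sqrt (r - 1/2) - 2 * Real.sqrt (r + 1/2)) + c₂ := hgval
    _ ≤ (c₁ / 4) * Real.sqrt x * (1 / Real.sqrt (r - 1/2) - 1 / Real.sqrt (r + 1/2)) + c₂ := by
        nlinarith [hmul]
end
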